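/- Let R be any ring with 1 and n ≥ 1. Suppose a matrix in Mₙ(R) admits two strict Bruhat normal forms T₁·U₁·P_{π₁}·V₁ = T₂·U₂·P_{π₂}·V₂ (each Tᵢ unipotent lower triangular, each Uᵢ an invertible diagonal matrix, each P_{πᵢ} a permutation matrix, each Vᵢ unipotent upper triangular with P_{πᵢ}·Vᵢ·P_{πᵢ}^{-1} unipotent upper triangular). Then T₁ = T₂, U₁ = U₂, π₁ = π₂, and V₁ = V₂. -/

import Mathlib

/-!
Writing `L = T₂⁻¹ T₁` (unipotent lower) and `W = V₂ V₁⁻¹` (unipotent upper), the two normal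
forms give `L U₁ P_{π₁} = U₂ P_{π₂} W`. The entry in position `(a, π₁ a)` is `U₁ a a ≠ 0` on the
left and `U₂ a a * W (π₂ a) (π₁ a)` on the right, so `π₂ a ≤ π₁ a` for every `a`, which forces
`π₁ = π₂ = π`. The strictness conditions make `P_π W P_π⁻¹` unipotent upper, so
`L U₁ = U₂ (P_π W P_π⁻¹)` is both lower and upper triangular: hence `L = 1` and `U₁ = U₂`, and
`V₁ = V₂` follows by cancelling the unit `T₁ U₁ P_π`.
-/

/-- A matrix is unipotent lower triangular if all entries above the diagonal vanish and
all diagonal entries equal `1`. -/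
def UnipotentLower {R : Type*} [Zero R] [One R] {n : ℕ}
    (T : Matrix (Fin n) (Fin n) R) : Prop :=
  (∀ i j : Fin n, i < j → T i j = 0) ∧ ∀ i, T i i = 1

/-- A matrix is unipotent upper triangular if all entries below the diagonal vanish and
all diagonal entries equal `1`. -/
def UnipotentUpper {R : Type*} [Zero R] [One R] {n : ℕ}
    (V : Matrix (Fin n) (Fin n) R) : Prop :=
  (∀ i j : Fin n, j < i → V i j = 0) ∧ ∀ i, V i i = 1

open Matrix Finset
open scoped Ring

theorem Equiv.Perm.eq_of_forall_apply_le {n : ℕ} {σ τ : Equiv.Perm (Fin n)}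
    (h : ∀ a, σ a ≤ τ a) : σ = τ := by
  have hsum : ∑ a, (σ a : ℕ) = ∑ a, (τ a : ℕ) := by
    rw [Equiv.sum_comp σ (fun x : Fin n => (x : ℕ)), Equiv.sum_comp τ (fun x : Fin n => (x : ℕ))]
  ext a
  exact (sum_eq_sum_iff_of_le fun a _ => Fin.le_def.1 (h a)).1 hsum a (mem_univ a)

namespace Matrix

variable {m R : Type*} [Fintype m]

theorem IsUpperTriangular.diag_mul [LinearOrder m] [NonUnitalNonAssocSemiring R]
    {A B : Matrix m m R} (hA : A.IsUpperTriangular) (hB : B.IsUpperTriangular) :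
    (A * B).diag = A.diag * B.diag := by
  ext i
  rw [diag_apply, mul_apply, sum_eq_single i]
  · rfl
  · intro k _ hk
    rcases hk.lt_or_gt with h | h
    · rw [hA h, zero_mul]
    · rw [hB h, mul_zero]
  · simp

theorem pow_eq_zero_of_strictlyUpperTriangular [Semiring R] {n : ℕ}
    {N : Matrix (Fin n) (Fin n) R} (hN : ∀ i j, j ≤ i → N i j = 0) : N ^ n = 0 := by
  have key : ∀ k (i j : Fin n), (j : ℕ) < i + k → (N ^ k) i j = 0 := by
    intro k
    induction k with
    | zero => exact fun i j hij => one_apply_ne (by omega)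
    | succ k ih =>
      intro i j hij
      rw [pow_succ, mul_apply]
      refine sum_eq_zero fun l _ => ?_
      by_cases hl : (l : ℕ) < i + k
      · rw [ih i l hl, zero_mul]
      · rw [hN l j (by omega), mul_zero]
  ext i j
  exact key n i j (by omega)

variable [DecidableEq m] [Semiring R]

theorem isUnit_apply_of_isUnit_diagonal {d : m → R} (h : IsUnit (diagonal d)) (i : m) :
    IsUnit (d i) := by
  obtain ⟨B, hdB, hBd⟩ := isUnit_iff_exists.1 h
  exact isUnit_iff_exists.2 ⟨B i i, by simpa using congr_fun₂ hdB i i,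
    by simpa using congr_fun₂ hBd i i⟩

theorem isUnit_permMatrix (σ : Equiv.Perm m) : IsUnit (σ.permMatrix R) :=
  isUnit_iff_exists.2 ⟨(σ⁻¹).permMatrix R,
    by rw [← permMatrix_mul, inv_mul_cancel, permMatrix_one],
    by rw [← permMatrix_mul, mul_inv_cancel, permMatrix_one]⟩

theorem permMatrix_mul_mul_inv_permMatrix (σ : Equiv.Perm m) (M : Matrix m m R) :
    σ.permMatrix R * M * (σ⁻¹).permMatrix R = M.submatrix σ σ := by
  rw [PEquiv.toMatrix_toPEquiv_mul, PEquiv.mul_toMatrix_toPEquiv]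
  rfl

end Matrix

section Unipotent

variable {R : Type*} [Ring R] {n : ℕ} {A B T V : Matrix (Fin n) (Fin n) R}

namespace UnipotentUpper

theorem isUpperTriangular (hV : UnipotentUpper V) : V.IsUpperTriangular :=
  fun i j h => hV.1 i j h

theorem mul (hA : UnipotentUpper A) (hB : UnipotentUpper B) : UnipotentUpper (A * B) := by
  refine ⟨fun i j h => hA.isUpperTriangular.mul hB.isUpperTriangular h, fun i => ?_⟩
  have := congr_fun (hA.isUpperTriangular.diag_mul hB.isUpperTriangular) i
  simpa [hA.2, hB.2] using this

theorem one_sub_pow_eq_zero (hV : UnipotentUpper V) : (1 - V) ^ n = 0 :=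
  pow_eq_zero_of_strictlyUpperTriangular fun i j hji => by
    rcases hji.lt_or_eq with h | rfl
    · simp [one_apply_ne h.ne', hV.1 i j h]
    · simp [hV.2]

theorem geom_sum_mul_self (hV : UnipotentUpper V) :
    (∑ k ∈ range n, (1 - V) ^ k) * V = 1 := by
  simpa [hV.one_sub_pow_eq_zero] using geom_sum_mul_neg (1 - V) n

theorem mul_geom_sum_self (hV : UnipotentUpper V) :
    V * ∑ k ∈ range n, (1 - V) ^ k = 1 := by
  simpa [hV.one_sub_pow_eq_zero] using mul_neg_geom_sum (1 - V) n

theorem isUnit (hV : UnipotentUpper V) : IsUnit V :=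
  isUnit_iff_exists.2 ⟨_, hV.mul_geom_sum_self, hV.geom_sum_mul_self⟩

theorem of_mul_eq_one (hV : UnipotentUpper V) (h : B * V = 1) : UnipotentUpper B := by
  have hB : B = ∑ k ∈ range n, (1 - V) ^ k :=
    calc B = B * (V * ∑ k ∈ range n, (1 - V) ^ k) := by rw [hV.mul_geom_sum_self, mul_one]
      _ = _ := by rw [← mul_assoc, h, one_mul]
  have hBu : B.IsUpperTriangular := by
    rw [hB]
    exact (blockTriangularSubsemiring R id).sum_mem fun k _ =>
      (blockTriangular_one.sub hV.isUpperTriangular).pow k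
  refine ⟨fun i j hij => hBu hij, fun i => ?_⟩
  have := congr_fun (hBu.diag_mul hV.isUpperTriangular) i
  simpa [h, hV.2] using this.symm

end UnipotentUpper

theorem unipotentLower_iff_unipotentUpper_reindex_revPerm :
    UnipotentLower T ↔ UnipotentUpper (reindexRingEquiv R Fin.revPerm T) := by
  simp only [UnipotentLower, UnipotentUpper, coe_reindexRingEquiv, reindex_apply,
    Fin.revPerm_symm, submatrix_apply, Fin.revPerm_apply]
  constructor
  · rintro ⟨hlt, hdiag⟩
    exact ⟨fun i j hji => hlt _ _ (Fin.rev_lt_rev.2 hji), fun i => hdiag _⟩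
  · rintro ⟨hlt, hdiag⟩
    exact ⟨fun i j hij => by simpa using hlt i.rev j.rev (Fin.rev_lt_rev.2 hij),
      fun i => by simpa using hdiag i.rev⟩

namespace UnipotentLower

theorem mul (hA : UnipotentLower A) (hB : UnipotentLower B) : UnipotentLower (A * B) := by
  rw [unipotentLower_iff_unipotentUpper_reindex_revPerm, map_mul] at *
  exact hA.mul hB

theorem isUnit (hT : UnipotentLower T) : IsUnit T :=
  (isUnit_map_iff (reindexRingEquiv R Fin.revPerm) T).1
    (unipotentLower_iff_unipotentUpper_reindex_revPerm.1 hT).isUnit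

theorem of_mul_eq_one (hT : UnipotentLower T) (h : B * T = 1) : UnipotentLower B := by
  rw [unipotentLower_iff_unipotentUpper_reindex_revPerm] at *
  exact hT.of_mul_eq_one (by rw [← map_mul, h, map_one])

end UnipotentLower

end Unipotent

section BruhatCell

variable {R : Type*} [Ring R] {n : ℕ} {L W : Matrix (Fin n) (Fin n) R} {d₁ d₂ : Fin n → R}

theorem perm_eq_of_mul_diagonal_mul_permMatrix_eq {σ τ : Equiv.Perm (Fin n)}
    (hL : ∀ i, L i i = 1) (hW : W.IsUpperTriangular) (hd₁ : ∀ i, d₁ i ≠ 0)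
    (h : L * diagonal d₁ * σ.permMatrix R = diagonal d₂ * τ.permMatrix R * W) : σ = τ := by
  refine (Equiv.Perm.eq_of_forall_apply_le fun a => ?_).symm
  by_contra! hlt
  have := congr_fun₂ h a (σ a)
  rw [mul_assoc (diagonal d₂), PEquiv.mul_toMatrix_toPEquiv, PEquiv.toMatrix_toPEquiv_mul] at this
  exact hd₁ a (by simpa [hL, hW hlt] using this)

theorem eq_one_and_eq_of_mul_diagonal_eq_diagonal_mul (hL : UnipotentLower L)
    (hW : UnipotentUpper W) (hd₁ : ∀ i, IsUnit (d₁ i))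
    (h : L * diagonal d₁ = diagonal d₂ * W) : L = 1 ∧ d₁ = d₂ := by
  have hij : ∀ i j, L i j * d₁ j = d₂ i * W i j := fun i j => by
    simpa using congr_fun₂ h i j
  refine ⟨?_, funext fun i => by simpa [hL.2, hW.2] using hij i i⟩
  ext i j
  rcases lt_trichotomy i j with hlt | rfl | hgt
  · simp [hL.1 i j hlt, one_apply_ne hlt.ne]
  · simp [hL.2]
  · have : L i j * d₁ j = 0 := by simpa [hW.1 i j hgt] using hij i j
    simp [(hd₁ j).mul_left_eq_zero.1 this, one_apply_ne hgt.ne']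

end BruhatCell

theorem strict_bruhat_unique_general {R : Type*} [Ring R] [Nontrivial R] {n : ℕ}
    (T₁ T₂ U₁ U₂ V₁ V₂ : Matrix (Fin n) (Fin n) R) (π₁ π₂ : Equiv.Perm (Fin n))
    (hT₁ : UnipotentLower T₁) (hT₂ : UnipotentLower T₂)
    (hU₁ : U₁.IsDiag) (hU₁u : IsUnit U₁) (hU₂ : U₂.IsDiag)
    (hV₁ : UnipotentUpper V₁) (hV₂ : UnipotentUpper V₂)
    (hstrict₁ : UnipotentUpper (π₁.permMatrix R * V₁ * (π₁⁻¹).permMatrix R))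
    (hstrict₂ : UnipotentUpper (π₂.permMatrix R * V₂ * (π₂⁻¹).permMatrix R))
    (heq : T₁ * U₁ * π₁.permMatrix R * V₁ = T₂ * U₂ * π₂.permMatrix R * V₂) :
    T₁ = T₂ ∧ U₁ = U₂ ∧ π₁ = π₂ ∧ V₁ = V₂ := by
  obtain ⟨d₁, rfl⟩ : ∃ d, U₁ = diagonal d := ⟨_, hU₁.diagonal_diag.symm⟩
  obtain ⟨d₂, rfl⟩ : ∃ d, U₂ = diagonal d := ⟨_, hU₂.diagonal_diag.symm⟩
  have hd₁ := isUnit_apply_of_isUnit_diagonal hU₁u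
  set L := T₂⁻¹ʳ * T₁
  set W := V₂ * V₁⁻¹ʳ
  have hL : UnipotentLower L := (hT₂.of_mul_eq_one (Ring.inverse_mul_cancel _ hT₂.isUnit)).mul hT₁
  have hV₁inv : UnipotentUpper V₁⁻¹ʳ := hV₁.of_mul_eq_one (Ring.inverse_mul_cancel _ hV₁.isUnit)
  have hcell : L * diagonal d₁ * π₁.permMatrix R = diagonal d₂ * π₂.permMatrix R * W :=
    calc L * diagonal d₁ * π₁.permMatrix R
        = T₂⁻¹ʳ * (T₁ * diagonal d₁ * π₁.permMatrix R * V₁) * V₁⁻¹ʳ := by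
          simp only [L, mul_assoc, Ring.mul_inverse_cancel _ hV₁.isUnit, mul_one]
      _ = _ := by
          rw [heq]; simp only [W, mul_assoc, Ring.inverse_mul_cancel_left _ _ hT₂.isUnit]
  obtain rfl := perm_eq_of_mul_diagonal_mul_permMatrix_eq hL.2 (hV₂.mul hV₁inv).isUpperTriangular
    (fun i => (hd₁ i).ne_zero) hcell
  rw [permMatrix_mul_mul_inv_permMatrix] at hstrict₁ hstrict₂
  have hWπ : UnipotentUpper (W.submatrix π₁ π₁) := by
    rw [← submatrix_mul_equiv V₂ V₁⁻¹ʳ π₁ π₁ π₁]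
    exact hstrict₂.mul (hstrict₁.of_mul_eq_one (by
      rw [submatrix_mul_equiv, Ring.inverse_mul_cancel _ hV₁.isUnit, submatrix_one_equiv]))
  have hLU : L * diagonal d₁ = diagonal d₂ * W.submatrix π₁ π₁ := by
    have hPP : π₁.permMatrix R * (π₁⁻¹).permMatrix R = 1 := by
      rw [← permMatrix_mul, inv_mul_cancel, permMatrix_one]
    rw [← permMatrix_mul_mul_inv_permMatrix, ← mul_one (L * _), ← hPP]
    simp only [← mul_assoc, hcell]
  obtain ⟨hL1, rfl⟩ := eq_one_and_eq_of_mul_diagonal_eq_diagonal_mul hL hWπ hd₁ hLU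
  obtain rfl : T₁ = T₂ :=
    calc T₁ = T₂ * L := (Ring.mul_inverse_cancel_left _ _ hT₂.isUnit).symm
      _ = T₂ := by rw [hL1, mul_one]
  exact ⟨rfl, rfl, rfl, ((hT₁.isUnit.mul hU₁u).mul (isUnit_permMatrix π₁)).mul_left_cancel heq⟩

/-- over any ring `R` with `1` (so `1 ≠ 0`) and `n ≥ 1`, the strict
Bruhat normal form of a matrix is unique: if
`T₁ * U₁ * P_{π₁} * V₁ = T₂ * U₂ * P_{π₂} * V₂` are two strict Bruhat normal forms,
then `T₁ = T₂`, `U₁ = U₂`, `π₁ = π₂` and `V₁ = V₂`. -/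
theorem strict_bruhat_unique {R : Type*} [Ring R] [Nontrivial R] {n : ℕ} (hn : 1 ≤ n)
    (T₁ T₂ U₁ U₂ V₁ V₂ : Matrix (Fin n) (Fin n) R) (π₁ π₂ : Equiv.Perm (Fin n))
    (hT₁ : UnipotentLower T₁) (hT₂ : UnipotentLower T₂)
    (hU₁ : U₁.IsDiag) (hU₁u : IsUnit U₁) (hU₂ : U₂.IsDiag) (hU₂u : IsUnit U₂)
    (hV₁ : UnipotentUpper V₁) (hV₂ : UnipotentUpper V₂)
    (hstrict₁ : UnipotentUpper (π₁.permMatrix R * V₁ * (π₁⁻¹).permMatrix R))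
    (hstrict₂ : UnipotentUpper (π₂.permMatrix R * V₂ * (π₂⁻¹).permMatrix R))
    (heq : T₁ * U₁ * π₁.permMatrix R * V₁ = T₂ * U₂ * π₂.permMatrix R * V₂) :
    T₁ = T₂ ∧ U₁ = U₂ ∧ π₁ = π₂ ∧ V₁ = V₂ :=
  strict_bruhat_unique_general T₁ T₂ U₁ U₂ V₁ V₂ π₁ π₂ hT₁ hT₂ hU₁ hU₁u hU₂ hV₁ hV₂ hstrict₁
    hstrict₂ heq
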